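/- arXiv:math/9906051 — 6 statements merged into one kernel-verified Lean document; each statement's English description precedes it below -/
import Mathlib

section
/- Let A be an LB-algebra, i.e. a Banach algebra with a closed generating cone A₊ satisfying ‖x + y‖ = ‖x‖ + ‖y‖ for x, y ∈ A₊, together with a positive functional e ∈ A* with e(v) = ‖v‖ for all v ∈ A₊. If A** has a left invariant mean m (i.e. ‖m‖ = 1, m ∈ A**₊, and a·m = e(a)m in A** for all a ∈ A, where the product is the Arens product), then A has a left weak approximate invariant mean: a net (a_i) in S = {x ∈ A₊ : ‖x‖ = 1} such that a a_i − a_i → 0 weakly for all a ∈ S. -/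
/-! The mean `m` lies in the weak* closure of the cone, so it is the weak* limit of a net `yᵢ`
in `A₊`. Testing against `e` shows `‖yᵢ‖ = e yᵢ → m e`, and `‖m‖ ≤ m e` because
`|f yᵢ| ≤ ‖f‖ e yᵢ`; hence `m e ≥ 1` and the normalised net `aᵢ = yᵢ / ‖yᵢ‖` is eventually
defined. For `x ∈ S` and `f ∈ A*`, left invariance reads `m (f ∘ (x * ·)) = e x • m f = m f`, so
`f (x aᵢ - aᵢ) = ‖yᵢ‖⁻¹ ((f ∘ (x * ·)) yᵢ - f yᵢ) → (m e)⁻¹ (m f - m f) = 0`. -/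

open Filter Topology

/-- An LB-algebra: a Banach algebra with a closed generating L-cone `P` and a positive
functional `e` computing the norm on the cone. -/
structure LBAlgebra (A : Type) [NonUnitalNormedRing A] [NormedSpace ℝ A]
    [IsScalarTower ℝ A A] [SMulCommClass ℝ A A] [CompleteSpace A] where
  P : Set A
  closed : IsClosed P
  zero_mem : (0 : A) ∈ P
  add_mem : ∀ x ∈ P, ∀ y ∈ P, x + y ∈ P
  smul_mem : ∀ c : ℝ, 0 ≤ c → ∀ x ∈ P, c • x ∈ P
  generating : ∀ a : A, ∃ x ∈ P, ∃ y ∈ P, a = x - y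
  Lcone : ∀ x ∈ P, ∀ y ∈ P, ‖x + y‖ = ‖x‖ + ‖y‖
  e : A →L[ℝ] ℝ
  e_eq : ∀ v ∈ P, e v = ‖v‖

/-- The action `a · m` of `A` on the bidual `A**` induced by the (first) Arens product:
`(a · m)(f) = m (f · a)` with `(f · a)(b) = f (a * b)`. -/
noncomputable def arensAct (A : Type) [NonUnitalNormedRing A] [NormedSpace ℝ A]
    [IsScalarTower ℝ A A] [SMulCommClass ℝ A A]
    (a : A) (m : (A →L[ℝ] ℝ) →L[ℝ] ℝ) : (A →L[ℝ] ℝ) →L[ℝ] ℝ :=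
  m.comp ((ContinuousLinearMap.compL ℝ A A ℝ).flip (ContinuousLinearMap.mul ℝ A a))

open Metric

theorem comap_nhds_pi_neBot_of_forall_finset {X F : Type*} (φ : X → F → ℝ) (μ : F → ℝ)
    (h : ∀ (s : Finset F) (ε : ℝ), 0 < ε → ∃ x, ∀ f ∈ s, |μ f - φ x f| < ε) :
    (comap φ (𝓝 μ)).NeBot := by
  rw [nhds_pi]
  refine ((hasBasis_pi fun f => nhds_basis_ball (x := μ f)).comap φ).neBot_iff.2 ?_
  rintro ⟨I, ε⟩ ⟨hI, hε⟩
  have hsmall : ∀ᶠ δ in 𝓝[>] (0 : ℝ), ∀ f ∈ I, δ < ε f :=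
    (eventually_all_finite hI).2 fun f hf => nhdsWithin_le_nhds (eventually_lt_nhds (hε f hf))
  obtain ⟨δ, hδ, hδpos⟩ := (hsmall.and self_mem_nhdsWithin).exists
  obtain ⟨x, hx⟩ := h hI.toFinset δ hδpos
  refine ⟨x, fun f hf => mem_ball'.2 ?_⟩
  rw [Real.dist_eq]
  exact (hx f (hI.mem_toFinset.2 hf)).trans (hδ f hf)

theorem norm_le_apply_of_tendsto_eval {E ι : Type*} [NormedAddCommGroup E] [NormedSpace ℝ E]
    {P : Set E} {e : E →L[ℝ] ℝ} (he : ∀ v ∈ P, e v = ‖v‖) {l : Filter ι} [l.NeBot]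
    {y : ι → E} (hy : ∀ i, y i ∈ P) {m : (E →L[ℝ] ℝ) →L[ℝ] ℝ}
    (hm : ∀ f : E →L[ℝ] ℝ, Tendsto (fun i => f (y i)) l (𝓝 (m f))) :
    ‖m‖ ≤ m e := by
  have he_y : ∀ i, e (y i) = ‖y i‖ := fun i => he _ (hy i)
  refine m.opNorm_le_bound (ge_of_tendsto' (hm e) fun i => he_y i ▸ norm_nonneg _) fun f => ?_
  rw [Real.norm_eq_abs]
  refine le_of_tendsto_of_tendsto' (hm f).abs ((hm e).mul_const ‖f‖) fun i => ?_
  rw [he_y, mul_comm, ← Real.norm_eq_abs]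
  exact f.le_opNorm (y i)

/-- If the bidual of an LB-algebra `A` has a left invariant mean `m`
(positive in the sense that it lies in the weak* closure of the image of the cone,
of norm one, and `a · m = e(a) m` for the Arens action), then `A` has a left weak
approximate invariant mean: a net `(aᵢ)` in `S = {x ∈ A₊ : ‖x‖ = 1}` with
`a aᵢ - aᵢ → 0` weakly for every `a ∈ S`. -/
theorem left_invariant_mean_gives_weak_approx_invariant_mean
    (A : Type) [NonUnitalNormedRing A] [NormedSpace ℝ A]
    [IsScalarTower ℝ A A] [SMulCommClass ℝ A A] [CompleteSpace A]
    (LB : LBAlgebra A) (m : (A →L[ℝ] ℝ) →L[ℝ] ℝ)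
    (hm_pos : ∀ (F : Finset (A →L[ℝ] ℝ)) (ε : ℝ), 0 < ε →
        ∃ x ∈ LB.P, ∀ f ∈ F, |m f - f x| < ε)
    (hm_norm : ‖m‖ = 1)
    (hm_inv : ∀ a : A, arensAct A a m = LB.e a • m) :
    ∃ (ι : Type) (l : Filter ι) (a : ι → A), l.NeBot ∧
      (∀ i, a i ∈ LB.P ∧ ‖a i‖ = 1) ∧
      ∀ x ∈ LB.P, ‖x‖ = 1 →
        ∀ f : A →L[ℝ] ℝ, Tendsto (fun i => f (x * a i - a i)) l (𝓝 0) := by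
  let ev : LB.P → (A →L[ℝ] ℝ) → ℝ := fun y f => f y
  let L := comap ev (𝓝 ⇑m)
  have : L.NeBot := comap_nhds_pi_neBot_of_forall_finset ev m fun s ε hε =>
    let ⟨y, hyP, hy⟩ := hm_pos s ε hε; ⟨⟨y, hyP⟩, hy⟩
  have hconv (f : A →L[ℝ] ℝ) : Tendsto (fun y : LB.P => f y) L (𝓝 (m f)) :=
    ((continuous_apply f).tendsto (⇑m)).comp (tendsto_comap (f := ev))
  have hme : 1 ≤ m LB.e := hm_norm ▸ norm_le_apply_of_tendsto_eval LB.e_eq Subtype.prop hconv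
  have hnorm : Tendsto (fun y : LB.P => ‖(y : A)‖) L (𝓝 (m LB.e)) :=
    (hconv LB.e).congr fun y => LB.e_eq y y.2
  let normalize (y : LB.P) : A := ‖(y : A)‖⁻¹ • (y : A)
  let S := {x | x ∈ LB.P ∧ ‖x‖ = 1}
  have hS : S ∈ map normalize L :=
    mem_map.2 <| (hnorm.eventually_ne (zero_lt_one.trans_le hme).ne').mono fun y hy =>
      ⟨LB.smul_mem _ (inv_nonneg.2 (norm_nonneg _)) _ y.2,
        norm_smul_inv_norm (norm_ne_zero_iff.1 hy)⟩
  refine ⟨S, comap (↑) (map normalize L), (↑), comap_coe_neBot_of_le_principal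
    (le_principal_iff.2 hS), Subtype.prop, fun x hxP hx f => ?_⟩
  let g := f.comp (ContinuousLinearMap.mul ℝ A x)
  have hmg : m g = m f :=
    calc m g = arensAct A x m f := rfl
      _ = m f := by rw [hm_inv, smul_apply, LB.e_eq x hxP, hx, one_smul]
  have hval (y : LB.P) : f (x * normalize y - normalize y) = ‖(y : A)‖⁻¹ * (g y - f y) := by
    simp [normalize, g, mul_sub, mul_smul_comm]
  have hlim := (hnorm.inv₀ (zero_lt_one.trans_le hme).ne').mul ((hconv g).sub (hconv f))
  rw [hmg, sub_self, mul_zero] at hlim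
  have hlim' : Tendsto (fun a => f (x * a - a)) (map normalize L) (𝓝 0) :=
    tendsto_map'_iff.2 (hlim.congr fun y => (hval y).symm)
  exact hlim'.comp tendsto_comap
end

section
/- Let A be an LB-algebra. If A has a left approximate invariant mean, then A** has a left invariant mean. -/
open Filter Topology

/-!
By Banach–Alaoglu the net `(aᵢ)`, viewed in the unit ball of `A**`, has a weak* limit `m` along
an ultrafilter refining the given filter. Since `‖s aᵢ - aᵢ‖ → 0`, the nets `(s aᵢ)` and `(aᵢ)`
have the same weak* limit, i.e. `s · m = m` for `s ∈ S`; homogeneity and the fact that the cone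
is generating turn this into `a · m = e(a) m`. Finally `e(aᵢ) = ‖aᵢ‖ = 1` gives `m(e) = 1`,
which together with `‖e‖ ≤ 1` forces `‖m‖ = 1`.
-/

open NormedSpace

section WeakStarLimit

variable {E : Type*} [NormedAddCommGroup E] [NormedSpace ℝ E] {ι : Type*}

theorem exists_norm_le_one_tendsto_apply (U : Ultrafilter ι) {a : ι → E}
    (ha : ∀ i, ‖a i‖ ≤ 1) :
    ∃ m : (E →L[ℝ] ℝ) →L[ℝ] ℝ, ‖m‖ ≤ 1 ∧
      ∀ f : E →L[ℝ] ℝ, Tendsto (fun i => f (a i)) U (𝓝 (m f)) := by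
  let K := WeakDual.toStrongDual ⁻¹' Metric.closedBall (0 : (E →L[ℝ] ℝ) →L[ℝ] ℝ) 1
  let j : ι → WeakDual ℝ (E →L[ℝ] ℝ) := fun i =>
    StrongDual.toWeakDual (inclusionInDoubleDual ℝ E (a i))
  have hjK : ↑(U.map j) ≤ 𝓟 K := le_principal_iff.2 <| mem_map.2 <| univ_mem' fun i =>
    (mem_closedBall_zero_iff (E := (E →L[ℝ] ℝ) →L[ℝ] ℝ)).2
      ((double_dual_bound ℝ E (a i)).trans (ha i))
  obtain ⟨m, hmK, hm⟩ := (WeakDual.isCompact_closedBall 0 1).ultrafilter_le_nhds _ hjK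
  refine ⟨WeakDual.toStrongDual m, by simpa [K] using hmK, fun f => ?_⟩
  exact ((WeakDual.eval_continuous f).tendsto m).comp hm

variable {l : Filter ι} {a : ι → E} {m : (E →L[ℝ] ℝ) →L[ℝ] ℝ}

theorem tendsto_apply_of_tendsto_norm_sub
    (hm : ∀ f : E →L[ℝ] ℝ, Tendsto (fun i => f (a i)) l (𝓝 (m f))) {b : ι → E}
    (hba : Tendsto (fun i => ‖b i - a i‖) l (𝓝 0)) (f : E →L[ℝ] ℝ) :
    Tendsto (fun i => f (b i)) l (𝓝 (m f)) := by
  have hdiff : Tendsto (fun i => f (b i) - f (a i)) l (𝓝 0) := by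
    refine squeeze_zero_norm (fun i => ?_) (by simpa using hba.const_mul ‖f‖)
    rw [← map_sub]
    exact f.le_opNorm _
  simpa using hdiff.add (hm f)

theorem exists_forall_mem_abs_sub_lt [l.NeBot]
    (hm : ∀ f : E →L[ℝ] ℝ, Tendsto (fun i => f (a i)) l (𝓝 (m f)))
    (F : Finset (E →L[ℝ] ℝ)) {ε : ℝ} (hε : 0 < ε) :
    ∃ i, ∀ f ∈ F, |m f - f (a i)| < ε := by
  have hev : ∀ᶠ i in l, ∀ f ∈ F, |m f - f (a i)| < ε := by
    refine (eventually_all_finset F).2 fun f _ => ?_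
    filter_upwards [Metric.tendsto_nhds.1 (hm f) ε hε] with i hi
    rwa [abs_sub_comm, ← Real.dist_eq]
  exact hev.exists

end WeakStarLimit

section ArensAction

variable {A : Type} [NonUnitalNormedRing A] [NormedSpace ℝ A] [IsScalarTower ℝ A A]
  [SMulCommClass ℝ A A]

theorem arensAct_apply (a : A) (m : (A →L[ℝ] ℝ) →L[ℝ] ℝ) (f : A →L[ℝ] ℝ) :
    arensAct A a m f = m (f.comp (ContinuousLinearMap.mul ℝ A a)) :=
  rfl

theorem arensAct_smul (c : ℝ) (a : A) (m : (A →L[ℝ] ℝ) →L[ℝ] ℝ) :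
    arensAct A (c • a) m = c • arensAct A a m := by
  ext f
  simp [arensAct_apply]

theorem arensAct_sub (a b : A) (m : (A →L[ℝ] ℝ) →L[ℝ] ℝ) :
    arensAct A (a - b) m = arensAct A a m - arensAct A b m := by
  ext f
  simp [arensAct_apply]

theorem arensAct_eq_self_of_tendsto {ι : Type*} {l : Filter ι} [l.NeBot] {a : ι → A}
    {m : (A →L[ℝ] ℝ) →L[ℝ] ℝ}
    (hm : ∀ f : A →L[ℝ] ℝ, Tendsto (fun i => f (a i)) l (𝓝 (m f))) {s : A}
    (hs : Tendsto (fun i => ‖s * a i - a i‖) l (𝓝 0)) :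
    arensAct A s m = m := by
  ext f
  exact tendsto_nhds_unique (hm _) (tendsto_apply_of_tendsto_norm_sub hm hs f)

end ArensAction

namespace LBAlgebra

variable {A : Type} [NonUnitalNormedRing A] [NormedSpace ℝ A] [IsScalarTower ℝ A A]
  [SMulCommClass ℝ A A] [CompleteSpace A] (LB : LBAlgebra A)

theorem norm_e_le_one : ‖LB.e‖ ≤ 1 := by
  refine ContinuousLinearMap.opNorm_le_bound _ zero_le_one fun v => ?_
  obtain ⟨x, hx, y, hy, rfl⟩ := LB.generating v
  rw [map_sub, LB.e_eq x hx, LB.e_eq y hy, one_mul, Real.norm_eq_abs]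
  exact abs_norm_sub_norm_le x y

variable {LB} {m : (A →L[ℝ] ℝ) →L[ℝ] ℝ}

theorem arensAct_eq_e_smul_of_mem
    (hS : ∀ s ∈ LB.P, ‖s‖ = 1 → arensAct A s m = m) {x : A} (hx : x ∈ LB.P) :
    arensAct A x m = LB.e x • m := by
  obtain rfl | hx0 := eq_or_ne x 0
  · simpa using arensAct_smul 0 (0 : A) m
  have hnorm : 0 < ‖x‖ := norm_pos_iff.2 hx0
  have hs : ‖x‖⁻¹ • x ∈ LB.P := LB.smul_mem _ (inv_nonneg.2 hnorm.le) x hx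
  have hs1 : ‖‖x‖⁻¹ • x‖ = 1 := by
    rw [norm_smul, norm_inv, norm_norm, inv_mul_cancel₀ hnorm.ne']
  calc arensAct A x m = arensAct A (‖x‖ • ‖x‖⁻¹ • x) m := by
        rw [smul_inv_smul₀ hnorm.ne']
    _ = LB.e x • m := by rw [arensAct_smul, hS _ hs hs1, LB.e_eq x hx]

theorem arensAct_eq_e_smul (hS : ∀ s ∈ LB.P, ‖s‖ = 1 → arensAct A s m = m) (a : A) :
    arensAct A a m = LB.e a • m := by
  obtain ⟨x, hx, y, hy, rfl⟩ := LB.generating a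
  rw [arensAct_sub, arensAct_eq_e_smul_of_mem hS hx, arensAct_eq_e_smul_of_mem hS hy, map_sub]
  ext f
  simp [sub_mul]

end LBAlgebra

/-- If an LB-algebra `A` has a left approximate invariant mean (a net in
`S = {x ∈ A₊ : ‖x‖ = 1}` with `‖x aᵢ - aᵢ‖ → 0` for all `x ∈ S`), then `A**` has a
left invariant mean: a positive `m` (in the weak* closure of the image of the cone)
with `‖m‖ = 1` and `a · m = e(a) m` for all `a ∈ A` (Arens action). -/
theorem approx_invariant_mean_gives_invariant_mean
    (A : Type) [NonUnitalNormedRing A] [NormedSpace ℝ A]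
    [IsScalarTower ℝ A A] [SMulCommClass ℝ A A] [CompleteSpace A]
    (LB : LBAlgebra A)
    (h : ∃ (ι : Type) (l : Filter ι) (a : ι → A), l.NeBot ∧
        (∀ i, a i ∈ LB.P ∧ ‖a i‖ = 1) ∧
        ∀ x ∈ LB.P, ‖x‖ = 1 → Tendsto (fun i => ‖x * a i - a i‖) l (𝓝 0)) :
    ∃ m : (A →L[ℝ] ℝ) →L[ℝ] ℝ,
      (∀ (F : Finset (A →L[ℝ] ℝ)) (ε : ℝ), 0 < ε →
        ∃ x ∈ LB.P, ∀ f ∈ F, |m f - f x| < ε) ∧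
      ‖m‖ = 1 ∧
      ∀ a : A, arensAct A a m = LB.e a • m := by
  obtain ⟨ι, l, a, hl, ha, hinv⟩ := h
  obtain ⟨U, hUl⟩ := Ultrafilter.exists_le l
  obtain ⟨m, hm_le, hm⟩ := exists_norm_le_one_tendsto_apply U fun i => (ha i).2.le
  have hme : m LB.e = 1 := by
    refine tendsto_nhds_unique (hm LB.e) (tendsto_const_nhds.congr fun i => ?_)
    rw [LB.e_eq _ (ha i).1, (ha i).2]
  refine ⟨m, fun F ε hε => ?_, le_antisymm hm_le ?_,
    LBAlgebra.arensAct_eq_e_smul fun s hs hs1 =>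
      arensAct_eq_self_of_tendsto hm ((hinv s hs hs1).mono_left hUl)⟩
  · obtain ⟨i, hi⟩ := exists_forall_mem_abs_sub_lt hm F hε
    exact ⟨a i, (ha i).1, hi⟩
  · calc (1 : ℝ) = m LB.e := hme.symm
      _ ≤ ‖m‖ * ‖LB.e‖ := (le_abs_self _).trans (m.le_opNorm _)
      _ ≤ ‖m‖ := mul_le_of_le_one_right (norm_nonneg m) LB.norm_e_le_one
end

section
/- Let S be a saturated Hopf C*-algebra and A an S-invariant subalgebra of the convolution algebra S*. Then any bounded left σ(S*,S)-approximate identity of A is automatically a bounded two-sided σ(S*,S)-approximate identity of A. -/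
open Filter Topology

/-- A (saturated) Hopf C*-algebra structure on a C*-algebra `S`, encoded through the
slice maps of the comultiplication `δ : S → M(S ⊗ S)`:
`sliceR f = (id ⊗ f) ∘ δ` and `sliceL f = (f ⊗ id) ∘ δ`.  The convolution product on
the dual `S*` is `f ★ g = (f ⊗ g) ∘ δ = f ∘ sliceR g = g ∘ sliceL f`.  Saturation is
encoded via its functional form: for every nonzero `S`-invariant subspace `N` of `S*`,
the span of the slices `(id ⊗ g) δ(r)` (resp. `(g ⊗ id) δ(r)`), `g ∈ N`, `r ∈ S`, is
dense in `S`. -/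
structure HopfCStarStructure (S : Type) [NonUnitalNormedRing S] [StarRing S] [CStarRing S]
    [NormedSpace ℂ S] [IsScalarTower ℂ S S] [SMulCommClass ℂ S S] [StarModule ℂ S]
    [CompleteSpace S] where
  sliceR : (S →L[ℂ] ℂ) →ₗ[ℂ] (S →L[ℂ] S)
  sliceL : (S →L[ℂ] ℂ) →ₗ[ℂ] (S →L[ℂ] S)
  norm_sliceR : ∀ (f : S →L[ℂ] ℂ) (r : S), ‖sliceR f r‖ ≤ ‖f‖ * ‖r‖
  norm_sliceL : ∀ (f : S →L[ℂ] ℂ) (r : S), ‖sliceL f r‖ ≤ ‖f‖ * ‖r‖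
  conv_eq : ∀ (f g : S →L[ℂ] ℂ) (r : S), f (sliceR g r) = g (sliceL f r)
  sliceR_conv : ∀ f g : S →L[ℂ] ℂ,
    (sliceR f).comp (sliceR g) = sliceR (f.comp (sliceR g))
  sliceL_conv : ∀ f g : S →L[ℂ] ℂ,
    (sliceL g).comp (sliceL f) = sliceL (f.comp (sliceR g))
  slice_comm : ∀ f g : S →L[ℂ] ℂ,
    (sliceL f).comp (sliceR g) = (sliceR g).comp (sliceL f)
  saturatedR : ∀ N : Submodule ℂ (S →L[ℂ] ℂ), N ≠ ⊥ →
    (∀ f ∈ N, ∀ s : S, f.comp (ContinuousLinearMap.mul ℂ S s) ∈ N ∧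
        f.comp ((ContinuousLinearMap.mul ℂ S).flip s) ∈ N) →
    Dense (↑(Submodule.span ℂ {x : S | ∃ f ∈ N, ∃ r : S, x = sliceR f r}) : Set S)
  saturatedL : ∀ N : Submodule ℂ (S →L[ℂ] ℂ), N ≠ ⊥ →
    (∀ f ∈ N, ∀ s : S, f.comp (ContinuousLinearMap.mul ℂ S s) ∈ N ∧
        f.comp ((ContinuousLinearMap.mul ℂ S).flip s) ∈ N) →
    Dense (↑(Submodule.span ℂ {x : S | ∃ f ∈ N, ∃ r : S, x = sliceL f r}) : Set S)

/-- The convolution product `f ★ g = (f ⊗ g) ∘ δ` on the dual of a Hopf C*-algebra. -/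
noncomputable def HopfCStarStructure.conv {S : Type} [NonUnitalNormedRing S] [StarRing S] [CStarRing S]
    [NormedSpace ℂ S] [IsScalarTower ℂ S S] [SMulCommClass ℂ S S] [StarModule ℂ S]
    [CompleteSpace S] (h : HopfCStarStructure S) (f g : S →L[ℂ] ℂ) : S →L[ℂ] ℂ :=
  f.comp (h.sliceR g)

/-! On a slice `(id ⊗ g') δ(r)` with `g' ∈ A`, commuting the two slice maps turns
`(g ★ f_i)((id ⊗ g') δ(r))` into `(f_i ★ g')((g ⊗ id) δ(r))`, which converges to
`g((id ⊗ g') δ(r))` by the left approximate-identity property. Saturation makes these slices span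
a dense subspace of `S`, and the functionals `g ★ f_i` are uniformly bounded, so convergence on
that dense span propagates to all of `S`. -/

theorem tendsto_apply_of_dense_span {ι 𝕜 E F : Type*} [NontriviallyNormedField 𝕜]
    [SeminormedAddCommGroup E] [NormedSpace 𝕜 E] [NormedAddCommGroup F] [NormedSpace 𝕜 F]
    {l : Filter ι} {T : ι → E →L[𝕜] F} {T₀ : E →L[𝕜] F} (hT : ∃ C, ∀ i, ‖T i‖ ≤ C)
    {D : Set E} (hD : Dense (Submodule.span 𝕜 D : Set E))
    (hconv : ∀ x ∈ D, Tendsto (T · x) l (𝓝 (T₀ x))) (x : E) :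
    Tendsto (T · x) l (𝓝 (T₀ x)) := by
  have hequi : Equicontinuous ((↑) ∘ T : ι → E → F) :=
    ((NormedSpace.equicontinuous_TFAE T).out 5 1).mp hT
  have hclosed : IsClosed {x | Tendsto (T · x) l (𝓝 (T₀ x))} :=
    hequi.isClosed_setOfPred_tendsto T₀.continuous
  have hspan : (Submodule.span 𝕜 D : Set E) ⊆ {x | Tendsto (T · x) l (𝓝 (T₀ x))} := by
    intro y hy
    induction hy using Submodule.span_induction with
    | mem y hy => exact hconv y hy
    | zero => simpa only [Set.mem_ofPred_eq, map_zero] using tendsto_const_nhds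
    | add y z _ _ hy hz => simpa only [Set.mem_ofPred_eq, map_add] using hy.add hz
    | smul a y _ hy => simpa only [Set.mem_ofPred_eq, map_smul] using hy.const_smul a
  exact hclosed.closure_subset_iff.mpr hspan (hD.closure_eq ▸ Set.mem_univ x)

namespace HopfCStarStructure

variable {S : Type} [NonUnitalNormedRing S] [StarRing S] [CStarRing S]
    [NormedSpace ℂ S] [IsScalarTower ℂ S S] [SMulCommClass ℂ S S] [StarModule ℂ S]
    [CompleteSpace S] (h : HopfCStarStructure S)

theorem opNorm_sliceR_le (g : S →L[ℂ] ℂ) : ‖h.sliceR g‖ ≤ ‖g‖ :=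
  (h.sliceR g).opNorm_le_bound (norm_nonneg g) (h.norm_sliceR g)

theorem norm_conv_le (f g : S →L[ℂ] ℂ) : ‖h.conv f g‖ ≤ ‖f‖ * ‖g‖ :=
  (f.opNorm_comp_le _).trans (mul_le_mul_of_nonneg_left (h.opNorm_sliceR_le g) (norm_nonneg f))

theorem conv_apply_sliceR (g k g' : S →L[ℂ] ℂ) (r : S) :
    h.conv g k (h.sliceR g' r) = h.conv k g' (h.sliceL g r) := by
  have hcomm : h.sliceL g (h.sliceR g' r) = h.sliceR g' (h.sliceL g r) :=
    congrArg (· r) (congrArg DFunLike.coe (h.slice_comm g g'))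
  simp only [conv, ContinuousLinearMap.comp_apply, h.conv_eq g k, hcomm]

end HopfCStarStructure

theorem left_weakstar_approx_id_is_two_sided_general
    (S : Type) [NonUnitalNormedRing S] [StarRing S] [CStarRing S]
    [NormedSpace ℂ S] [IsScalarTower ℂ S S] [SMulCommClass ℂ S S] [StarModule ℂ S]
    [CompleteSpace S] (h : HopfCStarStructure S)
    (A : Submodule ℂ (S →L[ℂ] ℂ))
    (hA_inv : ∀ f ∈ A, ∀ s : S, f.comp (ContinuousLinearMap.mul ℂ S s) ∈ A ∧
        f.comp ((ContinuousLinearMap.mul ℂ S).flip s) ∈ A)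
    (ι : Type) (l : Filter ι) (f : ι → (S →L[ℂ] ℂ))
    (hbdd : ∃ C : ℝ, ∀ i, ‖f i‖ ≤ C)
    (hleft : ∀ g ∈ A, ∀ s : S, Tendsto (fun i => h.conv (f i) g s) l (𝓝 (g s))) :
    ∀ g ∈ A, ∀ s : S, Tendsto (fun i => h.conv g (f i) s) l (𝓝 (g s)) := by
  intro g hg s
  by_cases hA : A = ⊥
  · obtain rfl : g = 0 := by simpa [hA] using hg
    simpa [HopfCStarStructure.conv] using tendsto_const_nhds
  obtain ⟨C, hC⟩ := hbdd
  have hbound : ∀ i, ‖h.conv g (f i)‖ ≤ ‖g‖ * C := fun i =>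
    (h.norm_conv_le g (f i)).trans (mul_le_mul_of_nonneg_left (hC i) (norm_nonneg g))
  refine tendsto_apply_of_dense_span ⟨_, hbound⟩ (h.saturatedR A hA hA_inv) ?_ s
  rintro _ ⟨g', hg', r, rfl⟩
  simp only [h.conv_apply_sliceR, h.conv_eq g g' r]
  exact hleft g' hg' (h.sliceL g r)

/-- Let `A` be an `S`-invariant subalgebra of the convolution algebra
`S*`.  Any bounded left `σ(S*,S)`-approximate identity of `A` is automatically a
bounded two-sided `σ(S*,S)`-approximate identity of `A`. -/
theorem left_weakstar_approx_id_is_two_sided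
    (S : Type) [NonUnitalNormedRing S] [StarRing S] [CStarRing S]
    [NormedSpace ℂ S] [IsScalarTower ℂ S S] [SMulCommClass ℂ S S] [StarModule ℂ S]
    [CompleteSpace S] (h : HopfCStarStructure S)
    (A : Submodule ℂ (S →L[ℂ] ℂ))
    (hA_alg : ∀ f ∈ A, ∀ g ∈ A, h.conv f g ∈ A)
    (hA_inv : ∀ f ∈ A, ∀ s : S, f.comp (ContinuousLinearMap.mul ℂ S s) ∈ A ∧
        f.comp ((ContinuousLinearMap.mul ℂ S).flip s) ∈ A)
    (ι : Type) (l : Filter ι) [l.NeBot] (f : ι → (S →L[ℂ] ℂ))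
    (hmem : ∀ i, f i ∈ A) (hbdd : ∃ C : ℝ, ∀ i, ‖f i‖ ≤ C)
    (hleft : ∀ g ∈ A, ∀ s : S, Tendsto (fun i => h.conv (f i) g s) l (𝓝 (g s))) :
    ∀ g ∈ A, ∀ s : S, Tendsto (fun i => h.conv g (f i) s) l (𝓝 (g s)) :=
  left_weakstar_approx_id_is_two_sided_general S h A hA_inv ι l f hbdd hleft
end

section
/- Let S be a saturated Hopf C*-algebra and A a left Hopf ideal of S* (a nonzero S-invariant left ideal of the convolution algebra S*). If A has a bounded left σ(S*,S)-approximate identity, then S* is unital and A is σ(S*,S)-dense in S*. -/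
open Filter Topology

/-!
By Banach–Alaoglu the bounded net `fᵢ` has a weak-* cluster point `e`, and `e ★ g = g` for
`g ∈ A`, i.e. `(id ⊗ e)δ` fixes every slice `(id ⊗ g)δ(r)` with `g ∈ A`. These slices span a
dense subspace by saturation, so `(id ⊗ e)δ = id` and `e` is a right identity of `S*`.
Coassociativity then shows that `(e ⊗ id)δ` fixes all left slices, so by saturation again it is
the identity and `e` is also a left identity. Finally `g = g ★ e` is a weak-* cluster value of
the net `g ★ fᵢ`, which lies in the left ideal `A`.
-/

namespace WeakDual

variable {𝕜 E ι : Type*} [NontriviallyNormedField 𝕜]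
  [SeminormedAddCommGroup E] [NormedSpace 𝕜 E] {l : Filter ι} {f : ι → StrongDual 𝕜 E}

theorem exists_mapClusterPt_of_norm_le [ProperSpace 𝕜] [l.NeBot] {C : ℝ}
    (hC : ∀ i, ‖f i‖ ≤ C) :
    ∃ e : WeakDual 𝕜 E, MapClusterPt e l (fun i => StrongDual.toWeakDual (f i)) := by
  have hball : map (fun i => StrongDual.toWeakDual (f i)) l ≤
      𝓟 (toStrongDual ⁻¹' Metric.closedBall 0 C) :=
    le_principal_iff.2 <| mem_map.2 <| univ_mem' fun i => by simpa using hC i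
  obtain ⟨e, -, he⟩ := (isCompact_closedBall (𝕜 := 𝕜) (E := E) 0 C).exists_clusterPt hball
  exact ⟨e, he⟩

theorem apply_eq_of_mapClusterPt_of_tendsto {e : WeakDual 𝕜 E}
    (he : MapClusterPt e l (fun i => StrongDual.toWeakDual (f i))) {x : E} {a : 𝕜}
    (hx : Tendsto (fun i => f i x) l (𝓝 a)) : e x = a :=
  eq_of_nhds_neBot <| (he.continuousAt_comp (eval_continuous x).continuousAt).clusterPt.mono hx

theorem frequently_norm_sub_lt_of_mapClusterPt {e : WeakDual 𝕜 E}
    (he : MapClusterPt e l (fun i => StrongDual.toWeakDual (f i))) {α : Type*} (F : Finset α)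
    (x : α → E) {ε : ℝ} (hε : 0 < ε) : ∃ᶠ i in l, ∀ a ∈ F, ‖e (x a) - f i (x a)‖ < ε := by
  refine he.frequently (p := fun φ => ∀ a ∈ F, ‖e (x a) - φ (x a)‖ < ε)
    ((eventually_all_finset F).2 fun a _ => ?_)
  have hcont : Continuous fun φ : WeakDual 𝕜 E => ‖e (x a) - φ (x a)‖ :=
    (continuous_const.sub (eval_continuous (x a))).norm
  exact hcont.continuousAt.eventually_lt continuousAt_const (by simpa using hε)

end WeakDual

namespace HopfCStarStructure

variable {S : Type} [NonUnitalNormedRing S] [StarRing S] [CStarRing S]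
  [NormedSpace ℂ S] [IsScalarTower ℂ S S] [SMulCommClass ℂ S S] [StarModule ℂ S]
  [CompleteSpace S] (h : HopfCStarStructure S) {e : S →L[ℂ] ℂ}

theorem conv_apply (f g : S →L[ℂ] ℂ) (r : S) : h.conv f g r = g (h.sliceL f r) :=
  h.conv_eq f g r

theorem conv_eq_self_of_sliceL_eq_id (he : h.sliceL e = .id ℂ S) (g : S →L[ℂ] ℂ) :
    h.conv e g = g :=
  ContinuousLinearMap.ext fun r => by rw [conv_apply, he]; rfl

theorem conv_eq_self_of_sliceR_eq_id (he : h.sliceR e = .id ℂ S) (g : S →L[ℂ] ℂ) :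
    h.conv g e = g := by
  rw [conv, he, ContinuousLinearMap.comp_id]

theorem sliceR_eq_id_of_conv_eq_self {A : Submodule ℂ (S →L[ℂ] ℂ)} (hA_ne : A ≠ ⊥)
    (hA_inv : ∀ f ∈ A, ∀ s : S, f.comp (ContinuousLinearMap.mul ℂ S s) ∈ A ∧
        f.comp ((ContinuousLinearMap.mul ℂ S).flip s) ∈ A)
    (he : ∀ g ∈ A, h.conv e g = g) : h.sliceR e = .id ℂ S := by
  refine ContinuousLinearMap.ext_on (h.saturatedR A hA_ne hA_inv) ?_
  rintro _ ⟨g, hg, r, rfl⟩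
  rw [← ContinuousLinearMap.comp_apply, h.sliceR_conv, ← conv, he g hg]
  rfl

theorem sliceL_eq_id_of_sliceR_eq_id [Nontrivial (S →L[ℂ] ℂ)] (he : h.sliceR e = .id ℂ S) :
    h.sliceL e = .id ℂ S := by
  refine ContinuousLinearMap.ext_on
    (h.saturatedL ⊤ bot_lt_top.ne' fun _ _ _ => ⟨trivial, trivial⟩) ?_
  rintro _ ⟨g, -, r, rfl⟩
  rw [← ContinuousLinearMap.comp_apply, h.sliceL_conv, he, ContinuousLinearMap.comp_id]
  rfl

end HopfCStarStructure

/-- Let `A` be a left Hopf ideal of `S*` (a nonzero `S`-invariant left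
ideal of the convolution algebra).  If `A` has a bounded left `σ(S*,S)`-approximate
identity, then `S*` is unital (for convolution) and `A` is `σ(S*,S)`-dense in `S*`. -/
theorem left_hopf_ideal_weakstar_approx_id
    (S : Type) [NonUnitalNormedRing S] [StarRing S] [CStarRing S]
    [NormedSpace ℂ S] [IsScalarTower ℂ S S] [SMulCommClass ℂ S S] [StarModule ℂ S]
    [CompleteSpace S] (h : HopfCStarStructure S)
    (A : Submodule ℂ (S →L[ℂ] ℂ)) (hA_ne : A ≠ ⊥)
    (hA_ideal : ∀ f : S →L[ℂ] ℂ, ∀ g ∈ A, h.conv f g ∈ A)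
    (hA_inv : ∀ f ∈ A, ∀ s : S, f.comp (ContinuousLinearMap.mul ℂ S s) ∈ A ∧
        f.comp ((ContinuousLinearMap.mul ℂ S).flip s) ∈ A)
    (ι : Type) (l : Filter ι) [l.NeBot] (f : ι → (S →L[ℂ] ℂ))
    (hmem : ∀ i, f i ∈ A) (hbdd : ∃ C : ℝ, ∀ i, ‖f i‖ ≤ C)
    (hleft : ∀ g ∈ A, ∀ s : S, Tendsto (fun i => h.conv (f i) g s) l (𝓝 (g s))) :
    (∃ e : S →L[ℂ] ℂ, ∀ g : S →L[ℂ] ℂ, h.conv e g = g ∧ h.conv g e = g) ∧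
    (∀ (g : S →L[ℂ] ℂ) (F : Finset S) (ε : ℝ), 0 < ε →
      ∃ g' ∈ A, ∀ s ∈ F, ‖g s - g' s‖ < ε) := by
  obtain ⟨C, hC⟩ := hbdd
  obtain ⟨φ, hφ⟩ := WeakDual.exists_mapClusterPt_of_norm_le (l := l) hC
  set e : S →L[ℂ] ℂ := WeakDual.toStrongDual φ
  have hleft_id : ∀ g ∈ A, h.conv e g = g := fun g hg =>
    ContinuousLinearMap.ext fun x =>
      WeakDual.apply_eq_of_mapClusterPt_of_tendsto hφ (hleft g hg x)
  have hR := h.sliceR_eq_id_of_conv_eq_self hA_ne hA_inv hleft_id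
  have : Nontrivial (S →L[ℂ] ℂ) := by
    obtain ⟨g, -, hg⟩ := Submodule.exists_mem_ne_zero_of_ne_bot hA_ne
    exact nontrivial_of_ne g 0 hg
  have hL := h.sliceL_eq_id_of_sliceR_eq_id hR
  refine ⟨⟨e, fun g => ⟨h.conv_eq_self_of_sliceL_eq_id hL g,
    h.conv_eq_self_of_sliceR_eq_id hR g⟩⟩, fun g F ε hε => ?_⟩
  obtain ⟨i, hi⟩ :=
    (WeakDual.frequently_norm_sub_lt_of_mapClusterPt hφ F (h.sliceL g) hε).exists
  refine ⟨h.conv g (f i), hA_ideal g (f i) (hmem i), fun s hs => ?_⟩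
  have hg : g s = e (h.sliceL g s) := by
    rw [← h.conv_apply, h.conv_eq_self_of_sliceR_eq_id hR]
  rw [hg, h.conv_apply]
  exact hi s hs
end

section
/- Let S be a saturated Hopf C*-algebra. The following are equivalent: (i) the convolution algebra S* is unital; (ii) S* has a bounded left approximate identity; (iii) S* has a bounded left σ(S*,S)-approximate identity. -/
/-
By Banach–Alaoglu a bounded left weak* approximate identity `fᵢ` has a weak* cluster point `e`,
and `e (sliceR g s) = lim fᵢ (sliceR g s) = g s`, i.e. `e ★ g = g`. Then
`sliceR e ∘ sliceR g = sliceR (e ★ g) = sliceR g`, so `sliceR e` fixes every slice `sliceR g r`;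
their span is dense by saturation, hence `sliceR e = id` and `g ★ e = g ∘ sliceR e = g`.
-/

open Filter Topology

theorem StrongDual.exists_forall_mapClusterPt_apply {𝕜 E ι : Type*} [NontriviallyNormedField 𝕜]
    [ProperSpace 𝕜] [SeminormedAddCommGroup E] [NormedSpace 𝕜 E] {l : Filter ι} [l.NeBot]
    {f : ι → StrongDual 𝕜 E} {C : ℝ} (hC : ∀ i, ‖f i‖ ≤ C) :
    ∃ e : StrongDual 𝕜 E, ∀ x, MapClusterPt (e x) l (fun i => f i x) := by
  have hball : ∀ i, toWeakDual (f i) ∈ WeakDual.toStrongDual ⁻¹' Metric.closedBall 0 C :=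
    fun i => mem_closedBall_zero_iff.2 (hC i)
  obtain ⟨e, -, he⟩ := (WeakDual.isCompact_closedBall (0 : StrongDual 𝕜 E) C).exists_mapClusterPt
    (f := l) (u := fun i => toWeakDual (f i)) (le_principal_iff.2 (mem_map.2 (univ_mem' hball)))
  exact ⟨WeakDual.toStrongDual e, fun x =>
    he.tendsto_comp (WeakDual.eval_continuous x).continuousAt⟩

theorem ContinuousLinearMap.tendsto_apply_of_tendsto_norm_sub {𝕜 E F ι : Type*}
    [NontriviallyNormedField 𝕜] [SeminormedAddCommGroup E] [NormedSpace 𝕜 E]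
    [SeminormedAddCommGroup F] [NormedSpace 𝕜 F] {l : Filter ι} {f : ι → E →L[𝕜] F} {g : E →L[𝕜] F}
    (hf : Tendsto (fun i => ‖f i - g‖) l (𝓝 0)) (x : E) :
    Tendsto (fun i => f i x) l (𝓝 (g x)) :=
  ((ContinuousLinearMap.apply 𝕜 F x).continuous.tendsto g).comp
    (tendsto_iff_norm_sub_tendsto_zero.2 hf)

namespace HopfCStarStructure

variable {S : Type} [NonUnitalNormedRing S] [StarRing S] [CStarRing S]
  [NormedSpace ℂ S] [IsScalarTower ℂ S S] [SMulCommClass ℂ S S] [StarModule ℂ S]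
  [CompleteSpace S] (h : HopfCStarStructure S)

theorem sliceR_comp_sliceR (f g : S →L[ℂ] ℂ) :
    (h.sliceR f).comp (h.sliceR g) = h.sliceR (h.conv f g) :=
  h.sliceR_conv f g

theorem exists_left_identity_of_weakStar_approx {ι : Type} {l : Filter ι} [l.NeBot]
    {f : ι → (S →L[ℂ] ℂ)} {C : ℝ} (hC : ∀ i, ‖f i‖ ≤ C)
    (hf : ∀ (g : S →L[ℂ] ℂ) (s : S), Tendsto (fun i => h.conv (f i) g s) l (𝓝 (g s))) :
    ∃ e : S →L[ℂ] ℂ, ∀ g, h.conv e g = g := by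
  obtain ⟨e, he⟩ := StrongDual.exists_forall_mapClusterPt_apply (l := l) hC
  exact ⟨e, fun g => ContinuousLinearMap.ext fun s =>
    eq_of_nhds_neBot ((he (h.sliceR g s)).clusterPt.mono (hf g s))⟩

theorem sliceR_eq_id_of_left_identity [Nontrivial (S →L[ℂ] ℂ)] {e : S →L[ℂ] ℂ}
    (he : ∀ g, h.conv e g = g) : h.sliceR e = ContinuousLinearMap.id ℂ S := by
  have hdense := h.saturatedR ⊤ bot_ne_top.symm fun _ _ _ => ⟨trivial, trivial⟩
  refine ContinuousLinearMap.ext_on hdense ?_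
  rintro _ ⟨g, -, r, rfl⟩
  rw [← ContinuousLinearMap.comp_apply, sliceR_comp_sliceR, he]
  rfl

theorem conv_right_identity_of_left_identity {e : S →L[ℂ] ℂ} (he : ∀ g, h.conv e g = g)
    (g : S →L[ℂ] ℂ) : h.conv g e = g := by
  cases subsingleton_or_nontrivial (S →L[ℂ] ℂ)
  · exact Subsingleton.elim _ _
  · rw [conv, h.sliceR_eq_id_of_left_identity he, ContinuousLinearMap.comp_id]

theorem exists_identity_of_weakStar_approx {ι : Type} {l : Filter ι} [l.NeBot]
    {f : ι → (S →L[ℂ] ℂ)} {C : ℝ} (hC : ∀ i, ‖f i‖ ≤ C)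
    (hf : ∀ (g : S →L[ℂ] ℂ) (s : S), Tendsto (fun i => h.conv (f i) g s) l (𝓝 (g s))) :
    ∃ e : S →L[ℂ] ℂ, ∀ g, h.conv e g = g ∧ h.conv g e = g := by
  obtain ⟨e, he⟩ := h.exists_left_identity_of_weakStar_approx (l := l) hC hf
  exact ⟨e, fun g => ⟨he g, h.conv_right_identity_of_left_identity he g⟩⟩

end HopfCStarStructure

/-- For a saturated Hopf C*-algebra `S`, the following are equivalent:
(i) the convolution algebra `S*` is unital; (ii) `S*` has a bounded left approximate
identity (in norm); (iii) `S*` has a bounded left `σ(S*,S)`-approximate identity. -/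
theorem dual_unital_iff_bounded_left_approx_id
    (S : Type) [NonUnitalNormedRing S] [StarRing S] [CStarRing S]
    [NormedSpace ℂ S] [IsScalarTower ℂ S S] [SMulCommClass ℂ S S] [StarModule ℂ S]
    [CompleteSpace S] (h : HopfCStarStructure S) :
    ((∃ e : S →L[ℂ] ℂ, ∀ g : S →L[ℂ] ℂ, h.conv e g = g ∧ h.conv g e = g) ↔
      (∃ (ι : Type) (l : Filter ι) (f : ι → (S →L[ℂ] ℂ)), l.NeBot ∧
        (∃ C : ℝ, ∀ i, ‖f i‖ ≤ C) ∧
        ∀ g : S →L[ℂ] ℂ, Tendsto (fun i => ‖h.conv (f i) g - g‖) l (𝓝 0))) ∧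
    ((∃ e : S →L[ℂ] ℂ, ∀ g : S →L[ℂ] ℂ, h.conv e g = g ∧ h.conv g e = g) ↔
      (∃ (ι : Type) (l : Filter ι) (f : ι → (S →L[ℂ] ℂ)), l.NeBot ∧
        (∃ C : ℝ, ∀ i, ‖f i‖ ≤ C) ∧
        ∀ (g : S →L[ℂ] ℂ) (s : S), Tendsto (fun i => h.conv (f i) g s) l (𝓝 (g s)))) := by
  have unital_iff_weakStar :
      (∃ e : S →L[ℂ] ℂ, ∀ g : S →L[ℂ] ℂ, h.conv e g = g ∧ h.conv g e = g) ↔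
      (∃ (ι : Type) (l : Filter ι) (f : ι → (S →L[ℂ] ℂ)), l.NeBot ∧
        (∃ C : ℝ, ∀ i, ‖f i‖ ≤ C) ∧
        ∀ (g : S →L[ℂ] ℂ) (s : S), Tendsto (fun i => h.conv (f i) g s) l (𝓝 (g s))) := by
    constructor
    · rintro ⟨e, he⟩
      refine ⟨Unit, ⊤, fun _ => e, inferInstance, ⟨‖e‖, fun _ => le_rfl⟩, fun g s => ?_⟩
      simp only [(he g).1, tendsto_const_nhds]
    · rintro ⟨ι, l, f, hl, ⟨C, hC⟩, hf⟩
      exact h.exists_identity_of_weakStar_approx (l := l) hC hf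
  refine ⟨⟨?_, ?_⟩, unital_iff_weakStar⟩
  · rintro ⟨e, he⟩
    refine ⟨Unit, ⊤, fun _ => e, inferInstance, ⟨‖e‖, fun _ => le_rfl⟩, fun g => ?_⟩
    simp only [(he g).1, sub_self, norm_zero, tendsto_const_nhds]
  · rintro ⟨ι, l, f, hl, hC, hf⟩
    exact unital_iff_weakStar.2 ⟨ι, l, f, hl, hC, fun g =>
      ContinuousLinearMap.tendsto_apply_of_tendsto_norm_sub (hf g)⟩
end

section
/- Let A be a Banach algebra which is a left ideal of a Banach algebra B, and suppose A has a bounded left approximate identity (f_i). Suppose further that there is a Banach space S on which A acts such that A·S is dense in S and the topology of pointwise convergence on S restricted to A is weaker than the left strict topology on M_l(A). Then for every l ∈ M_l(A), the net (l(f_i)) converges pointwise on S to a bounded functional Ψ(l) with ‖Ψ(l)‖ ≤ ‖l‖·sup_i ‖f_i‖, and the resulting map Ψ : M_l(A) → S* is a continuous right inverse of the canonical map, so the canonical map from the relevant functional space to M_l(A) is bijective. -/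
open Filter Topology

/-!
Each `P (L fᵢ)` has norm at most `‖L‖ * C`, and on a product `a · s` it equals
`P (L (fᵢ a)) s`, which tends to `P (L a) s` because `fᵢ a → a`. A bounded family of
functionals is equicontinuous, so convergence on the dense span of `A · S₀` propagates to all
of `S₀`, and the pointwise limit stays in the closed ball of radius `‖L‖ * C`.
-/

section Equicontinuity

variable {ι X α : Type*} [TopologicalSpace X] [UniformSpace α]
  {l : Filter ι} {F : ι → X → α} {s : Set X} {x : X}

theorem EquicontinuousAt.cauchy_map_of_mem_closure (hF : EquicontinuousAt F x)
    (hs : ∀ y ∈ s, Cauchy (map (F · y) l)) (hx : x ∈ closure s) :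
    Cauchy (map (F · x) l) := by
  rw [mem_closure_iff_nhds] at hx
  obtain ⟨y₀, -, hy₀⟩ := hx _ univ_mem
  refine cauchy_map_iff.2 ⟨(cauchy_map_iff.1 (hs y₀ hy₀)).1, fun U hU => mem_map.2 ?_⟩
  obtain ⟨V, hV, hVsymm, hVU⟩ := comp_comp_symm_mem_uniformity_sets hU
  -- one `y ∈ s` that is `V`-close to `x` for every `F i` links the two Cauchy conditions
  obtain ⟨y, hFy, hys⟩ := hx _ (hF V hV)
  filter_upwards [mem_map.1 ((cauchy_map_iff.1 (hs y hys)).2 hV)] with p hp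
  exact hVU ⟨F p.2 y, ⟨F p.1 y, hFy p.1, hp⟩, SetRel.symm V (hFy p.2)⟩

theorem EquicontinuousAt.exists_tendsto_of_mem_closure [CompleteSpace α] [l.NeBot]
    (hF : EquicontinuousAt F x) (hs : ∀ y ∈ s, ∃ z, Tendsto (F · y) l (𝓝 z))
    (hx : x ∈ closure s) : ∃ z, Tendsto (F · x) l (𝓝 z) :=
  cauchy_map_iff_exists_tendsto.1 <| hF.cauchy_map_of_mem_closure
    (fun y hy => (hs y hy).elim fun _ hz => hz.cauchy_map) hx

end Equicontinuity

section PointwiseLimit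

variable {ι R 𝕜 M E G : Type*} {l : Filter ι}

theorem LinearMap.exists_tendsto_of_mem_span [Semiring R] [AddCommMonoid M] [Module R M]
    [TopologicalSpace G] [AddCommMonoid G] [Module R G] [ContinuousAdd G] [ContinuousConstSMul R G]
    {F : ι → M →ₗ[R] G} {D : Set M} (hD : ∀ x ∈ D, ∃ y, Tendsto (F · x) l (𝓝 y))
    {x : M} (hx : x ∈ Submodule.span R D) : ∃ y, Tendsto (F · x) l (𝓝 y) := by
  induction hx using Submodule.span_induction with
  | mem x hx => exact hD x hx
  | zero => exact ⟨0, by simpa using tendsto_const_nhds⟩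
  | add x x' _ _ hx hx' =>
    obtain ⟨y, hy⟩ := hx
    obtain ⟨y', hy'⟩ := hx'
    exact ⟨y + y', by simpa using hy.add hy'⟩
  | smul c x _ hx =>
    obtain ⟨y, hy⟩ := hx
    exact ⟨c • y, by simpa using hy.const_smul c⟩

variable [NontriviallyNormedField 𝕜] [NormedAddCommGroup E] [NormedSpace 𝕜 E]
  [NormedAddCommGroup G] [NormedSpace 𝕜 G] [CompleteSpace G]

theorem ContinuousLinearMap.exists_tendsto_of_dense_span_of_norm_le [l.NeBot]
    (F : ι → E →L[𝕜] G) {C : ℝ} (hC : ∀ i, ‖F i‖ ≤ C) {D : Set E}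
    (hD : Dense (Submodule.span 𝕜 D : Set E)) (hconv : ∀ x ∈ D, ∃ y, Tendsto (F · x) l (𝓝 y)) :
    ∃ φ : E →L[𝕜] G, (∀ x, Tendsto (F · x) l (𝓝 (φ x))) ∧ ‖φ‖ ≤ C := by
  have hequi : Equicontinuous ((↑) ∘ F) :=
    ((NormedSpace.equicontinuous_TFAE F).out 5 1).1 (⟨C, hC⟩ : ∃ C, ∀ i, ‖F i‖ ≤ C)
  have hall : ∀ x, ∃ y, Tendsto (F · x) l (𝓝 y) := fun x =>
    (hequi x).exists_tendsto_of_mem_closure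
      (fun y hy => LinearMap.exists_tendsto_of_mem_span (F := fun i => (F i : E →ₗ[𝕜] G)) hconv hy)
      (hD x)
  choose f hf using hall
  obtain ⟨φ, hφC, rfl⟩ : f ∈ ((↑) : (E →L[𝕜] G) → E → G) '' Metric.closedBall 0 C :=
    (isClosed_image_coe_closedBall 0 C).mem_of_tendsto (tendsto_pi_nhds.2 hf)
      (Eventually.of_forall fun i => Set.mem_image_of_mem _ (mem_closedBall_zero_iff.2 (hC i)))
  exact ⟨φ, hf, mem_closedBall_zero_iff.1 hφC⟩

end PointwiseLimit

theorem left_multipliers_from_approx_identity_general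
    (A : Type) [NonUnitalNormedRing A] [NormedSpace ℝ A]
    (S₀ : Type) [NormedAddCommGroup S₀] [NormedSpace ℝ S₀]
    (act : A →ₗ[ℝ] S₀ →ₗ[ℝ] S₀)
    (P : A →ₗ[ℝ] (S₀ →L[ℝ] ℝ))
    (hP_isom : ∀ a : A, ‖P a‖ = ‖a‖)
    (hP_mul : ∀ (g h : A) (s : S₀), P g (act h s) = P (g * h) s)
    (hdense : Dense (↑(Submodule.span ℝ {x : S₀ | ∃ (a : A) (s : S₀), x = act a s}) : Set S₀))
    (ι : Type) (l : Filter ι) [l.NeBot] (f : ι → A) (C : ℝ)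
    (hbdd : ∀ i, ‖f i‖ ≤ C)
    (happrox : ∀ a : A, Tendsto (fun i => ‖f i * a - a‖) l (𝓝 0)) :
    ∀ L : A →L[ℝ] A, (∀ a b : A, L (a * b) = L a * b) →
      ∃ φ : S₀ →L[ℝ] ℝ,
        (∀ s : S₀, Tendsto (fun i => P (L (f i)) s) l (𝓝 (φ s))) ∧
        ‖φ‖ ≤ ‖L‖ * C ∧
        (∀ (a : A) (s : S₀), P (L a) s = φ (act a s)) ∧
        ∀ φ' : S₀ →L[ℝ] ℝ, (∀ (a : A) (s : S₀), P (L a) s = φ' (act a s)) → φ' = φ := by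
  intro L hL
  let Pᵢ : A →ₗᵢ[ℝ] S₀ →L[ℝ] ℝ := ⟨P, hP_isom⟩
  have hbound : ∀ i, ‖P (L (f i))‖ ≤ ‖L‖ * C := fun i => by
    rw [hP_isom]
    exact L.le_of_opNorm_le_of_le le_rfl (hbdd i)
  have hgen : ∀ a s, Tendsto (fun i => P (L (f i)) (act a s)) l (𝓝 (P (L a) s)) := by
    intro a s
    have hfa : Tendsto (fun i => f i * a) l (𝓝 a) := tendsto_iff_norm_sub_tendsto_zero.2 (happrox a)
    simp_rw [hP_mul, ← hL]
    exact ((ContinuousLinearMap.apply ℝ ℝ s).continuous.comp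
      (Pᵢ.continuous.comp L.continuous)).continuousAt.tendsto.comp hfa
  obtain ⟨φ, hφ, hφC⟩ := ContinuousLinearMap.exists_tendsto_of_dense_span_of_norm_le
    (fun i => P (L (f i))) hbound hdense (by rintro _ ⟨a, s, rfl⟩; exact ⟨_, hgen a s⟩)
  have hφP : ∀ a s, P (L a) s = φ (act a s) := fun a s =>
    tendsto_nhds_unique (hgen a s) (hφ _)
  refine ⟨φ, hφ, hφC, hφP, fun φ' hφ' => ContinuousLinearMap.ext_on hdense ?_⟩
  rintro _ ⟨a, s, rfl⟩
  rw [← hφ' a s, hφP]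

/-- abstract form of Theorem 2.8(c): Let `A` be a Banach algebra with a
bounded left approximate identity `(fᵢ)`, acting on a Banach space `S₀` (by `act`), and
embedded in the functionals on `S₀` by a pairing `P` compatible with the action
(`P g (act h s) = P (g h) s`) such that `A · S₀` is total in `S₀` and the topology of
pointwise convergence on `S₀`, restricted to `A`, is weaker than the left strict
topology of `M_l(A)`.  Then for every left multiplier `L` of `A` the net `(L fᵢ)`
converges pointwise on `S₀` to a bounded functional `Ψ(L)` with
`‖Ψ(L)‖ ≤ ‖L‖ · sup ‖fᵢ‖`, and `Ψ` is a (two-sided, by uniqueness) inverse of the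
canonical map `h ↦ (left convolution by h)`, so the canonical map is bijective. -/
theorem left_multipliers_from_approx_identity
    (A : Type) [NonUnitalNormedRing A] [NormedSpace ℝ A]
    [IsScalarTower ℝ A A] [SMulCommClass ℝ A A] [CompleteSpace A]
    (S₀ : Type) [NormedAddCommGroup S₀] [NormedSpace ℝ S₀] [CompleteSpace S₀]
    (act : A →ₗ[ℝ] S₀ →ₗ[ℝ] S₀)
    (hact_norm : ∀ (a : A) (s : S₀), ‖act a s‖ ≤ ‖a‖ * ‖s‖)
    (P : A →ₗ[ℝ] (S₀ →L[ℝ] ℝ))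
    (hP_isom : ∀ a : A, ‖P a‖ = ‖a‖)
    (hP_mul : ∀ (g h : A) (s : S₀), P g (act h s) = P (g * h) s)
    (hdense : Dense (↑(Submodule.span ℝ {x : S₀ | ∃ (a : A) (s : S₀), x = act a s}) : Set S₀))
    (hweaker : ∀ (κ : Type) (m : Filter κ), m.NeBot → ∀ (g : κ → A) (g₀ : A),
        (∀ a : A, Tendsto (fun j => ‖g j * a - g₀ * a‖) m (𝓝 0)) →
        ∀ s : S₀, Tendsto (fun j => P (g j) s) m (𝓝 (P g₀ s)))
    (ι : Type) (l : Filter ι) [l.NeBot] (f : ι → A) (C : ℝ)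
    (hbdd : ∀ i, ‖f i‖ ≤ C)
    (happrox : ∀ a : A, Tendsto (fun i => ‖f i * a - a‖) l (𝓝 0)) :
    ∀ L : A →L[ℝ] A, (∀ a b : A, L (a * b) = L a * b) →
      ∃ φ : S₀ →L[ℝ] ℝ,
        (∀ s : S₀, Tendsto (fun i => P (L (f i)) s) l (𝓝 (φ s))) ∧
        ‖φ‖ ≤ ‖L‖ * C ∧
        (∀ (a : A) (s : S₀), P (L a) s = φ (act a s)) ∧
        ∀ φ' : S₀ →L[ℝ] ℝ, (∀ (a : A) (s : S₀), P (L a) s = φ' (act a s)) → φ' = φ :=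
  left_multipliers_from_approx_identity_general A S₀ act P hP_isom hP_mul hdense ι l f C hbdd
    happrox
end
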